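/- arXiv:2404.17201 — 3 statements merged into one kernel-verified Lean document; each statement's English description precedes it below -/
import Mathlib

section
/- Let n ≥ 3, ε > 0, R > 0, and let (a^{ij}) be a symmetric positive definite (n-1)×(n-1) matrix with a(ξ) = ξᵗ(a^{ij})ξ for ξ ∈ S^{n-2}. Let α, α̃ ∈ (0,1) with α̃ > α, and assume (α̃ - α) Σᵢ (Σⱼ a^{ij}xⱼ)² / (ε + a(x/|x|)|x|²) ≤ (1/2) Σᵢ a^{ii} for all |x| ≤ R. Then the function ψ(x) = -(ε + a(x/|x|)|x|²)^{(α-α̃)/2} satisfies div[(ε + a(x/|x|)|x|²)∇ψ](x) ≥ (1/C₀)(ε + a(x/|x|)|x|²)^{(α-α̃)/2} in B_R ⊂ ℝ^{n-1}, where C₀ = 2/((Σᵢ a^{ii})(α̃ - α)). -/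
open Metric

noncomputable def Dmap {m : ℕ} (A : Matrix (Fin m) (Fin m) ℝ) (y : EuclideanSpace ℝ (Fin m)) :
    EuclideanSpace ℝ (Fin m) →L[ℝ] ℝ :=
  ∑ i, ∑ j, ((A i j * y i) • (EuclideanSpace.proj j : EuclideanSpace ℝ (Fin m) →L[ℝ] ℝ)
    + y j • (A i j • (EuclideanSpace.proj i : EuclideanSpace ℝ (Fin m) →L[ℝ] ℝ)))

noncomputable def Lmap {m : ℕ} (A : Matrix (Fin m) (Fin m) ℝ) (k : Fin m) :
    EuclideanSpace ℝ (Fin m) →L[ℝ] ℝ :=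
  ∑ j, A k j • (EuclideanSpace.proj j : EuclideanSpace ℝ (Fin m) →L[ℝ] ℝ)

theorem Lmap_apply {m : ℕ} (A : Matrix (Fin m) (Fin m) ℝ) (k : Fin m)
    (y : EuclideanSpace ℝ (Fin m)) : Lmap A k y = ∑ j, A k j * y j := by
  simp [Lmap, ContinuousLinearMap.sum_apply]

theorem Lmap_single {m : ℕ} (A : Matrix (Fin m) (Fin m) ℝ) (k : Fin m) :
    Lmap A k (EuclideanSpace.single k 1) = A k k := by
  simp [Lmap, ContinuousLinearMap.sum_apply, EuclideanSpace.single_apply,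
    Finset.sum_ite_eq', Finset.mem_univ]

theorem hasFDerivAt_L {m : ℕ} (A : Matrix (Fin m) (Fin m) ℝ) (k : Fin m)
    (y : EuclideanSpace ℝ (Fin m)) :
    HasFDerivAt (fun y : EuclideanSpace ℝ (Fin m) => ∑ j, A k j * y j) (Lmap A k) y :=
  HasFDerivAt.fun_sum fun j _ =>
    (EuclideanSpace.proj j : EuclideanSpace ℝ (Fin m) →L[ℝ] ℝ).hasFDerivAt.const_mul (A k j)

theorem hasFDerivAt_Q {m : ℕ} (ε : ℝ) (A : Matrix (Fin m) (Fin m) ℝ)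
    (y : EuclideanSpace ℝ (Fin m)) :
    HasFDerivAt (fun y : EuclideanSpace ℝ (Fin m) => ε + ∑ i, ∑ j, A i j * y i * y j)
      (Dmap A y) y := by
  apply HasFDerivAt.const_add
  exact HasFDerivAt.fun_sum fun i _ => HasFDerivAt.fun_sum fun j _ =>
    (((EuclideanSpace.proj i : EuclideanSpace ℝ (Fin m) →L[ℝ] ℝ).hasFDerivAt.const_mul
      (A i j)).mul (EuclideanSpace.proj j : EuclideanSpace ℝ (Fin m) →L[ℝ] ℝ).hasFDerivAt)

theorem Dmap_apply {m : ℕ} (A : Matrix (Fin m) (Fin m) ℝ) (hA : A.IsSymm)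
    (y : EuclideanSpace ℝ (Fin m)) (k : Fin m) :
    Dmap A y (EuclideanSpace.single k 1) = 2 * ∑ j, A k j * y j := by
  simp only [Dmap, ContinuousLinearMap.sum_apply, ContinuousLinearMap.add_apply,
    ContinuousLinearMap.smul_apply, PiLp.proj_apply, EuclideanSpace.single_apply,
    smul_eq_mul, mul_ite, mul_one, mul_zero, Finset.sum_add_distrib, Finset.sum_ite_eq',
    Finset.mem_univ, if_true]
  rw [Finset.sum_comm]
  simp only [Finset.sum_ite_eq', Finset.mem_univ, if_true]
  rw [two_mul]
  congr 1
  · exact Finset.sum_congr rfl fun i _ => by rw [hA.apply k i]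
  · exact Finset.sum_congr rfl fun j _ => by ring

theorem Q_pos {m : ℕ} {ε : ℝ} (hε : 0 < ε) {A : Matrix (Fin m) (Fin m) ℝ} (hpd : A.PosDef)
    (y : EuclideanSpace ℝ (Fin m)) : 0 < ε + ∑ i, ∑ j, A i j * y i * y j := by
  have h := hpd.posSemidef.dotProduct_mulVec_nonneg (fun i => y i)
  have e : dotProduct (star fun i => y i) (A.mulVec fun i => y i)
      = ∑ i, ∑ j, A i j * y i * y j := by
    simp only [dotProduct, Matrix.mulVec, star_trivial, Pi.star_apply, Finset.mul_sum]
    exact Finset.sum_congr rfl fun i _ => Finset.sum_congr rfl fun j _ => by ring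
  rw [e] at h
  linarith

theorem inner_eq {m : ℕ} {ε : ℝ} (hε : 0 < ε) {A : Matrix (Fin m) (Fin m) ℝ}
    (hA : A.IsSymm) (hpd : A.PosDef) (b : ℝ) (k : Fin m) :
    (fun y : EuclideanSpace ℝ (Fin m) =>
        (ε + ∑ i, ∑ j, A i j * y i * y j) *
          fderiv ℝ (fun z : EuclideanSpace ℝ (Fin m) =>
            -(ε + ∑ i, ∑ j, A i j * z i * z j) ^ b) y (EuclideanSpace.single k 1))
      = fun y : EuclideanSpace ℝ (Fin m) =>
          (-2 * b) * ((ε + ∑ i, ∑ j, A i j * y i * y j) ^ b * ∑ j, A k j * y j) := by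
  funext y
  have hq : 0 < ε + ∑ i, ∑ j, A i j * y i * y j := Q_pos hε hpd y
  have hf : HasFDerivAt (fun z : EuclideanSpace ℝ (Fin m) =>
      -(ε + ∑ i, ∑ j, A i j * z i * z j) ^ b)
      (-((b * (ε + ∑ i, ∑ j, A i j * y i * y j) ^ (b - 1)) • Dmap A y)) y :=
    ((hasFDerivAt_Q ε A y).rpow_const (Or.inl hq.ne')).neg
  rw [hf.fderiv]
  simp only [ContinuousLinearMap.neg_apply, ContinuousLinearMap.smul_apply,
    Dmap_apply A hA, smul_eq_mul]
  have hb : b - 1 + 1 = b := by ring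
  have e1 : (ε + ∑ i, ∑ j, A i j * y i * y j) ^ b
      = (ε + ∑ i, ∑ j, A i j * y i * y j) ^ (b - 1) * (ε + ∑ i, ∑ j, A i j * y i * y j) := by
    have e2 := Real.rpow_add_one hq.ne' (b - 1)
    rw [hb] at e2
    exact e2
  rw [e1]; ring

theorem outer_eval {m : ℕ} {ε : ℝ} (hε : 0 < ε) {A : Matrix (Fin m) (Fin m) ℝ}
    (hA : A.IsSymm) (hpd : A.PosDef) (b : ℝ) (k : Fin m) (x : EuclideanSpace ℝ (Fin m)) :
    fderiv ℝ (fun y : EuclideanSpace ℝ (Fin m) =>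
        (-2 * b) * ((ε + ∑ i, ∑ j, A i j * y i * y j) ^ b * ∑ j, A k j * y j)) x
        (EuclideanSpace.single k 1)
      = (-2 * b) * ((ε + ∑ i, ∑ j, A i j * x i * x j) ^ b * A k k
          + (∑ j, A k j * x j) *
            (b * (ε + ∑ i, ∑ j, A i j * x i * x j) ^ (b - 1) * (2 * ∑ j, A k j * x j))) := by
  have hq : 0 < ε + ∑ i, ∑ j, A i j * x i * x j := Q_pos hε hpd x
  have hG : HasFDerivAt (fun y : EuclideanSpace ℝ (Fin m) =>
      (-2 * b) * ((ε + ∑ i, ∑ j, A i j * y i * y j) ^ b * ∑ j, A k j * y j))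
      ((-2 * b) • ((ε + ∑ i, ∑ j, A i j * x i * x j) ^ b • Lmap A k
        + (∑ j, A k j * x j) •
          ((b * (ε + ∑ i, ∑ j, A i j * x i * x j) ^ (b - 1)) • Dmap A x))) x :=
    (((hasFDerivAt_Q ε A x).rpow_const (Or.inl hq.ne')).mul (hasFDerivAt_L A k x)).const_mul
      (-2 * b)
  rw [hG.fderiv]
  simp only [ContinuousLinearMap.smul_apply, ContinuousLinearMap.add_apply,
    Lmap_single, Dmap_apply A hA, smul_eq_mul]

/-- The auxiliary function `ψ(x) = -(ε + a(x/|x|)|x|²)^{(α-α̃)/2}` is a strict subsolution: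
`div[(ε + a(x/|x|)|x|²)∇ψ] ≥ (1/C₀)(ε + a(x/|x|)|x|²)^{(α-α̃)/2}` in `B_R`, where
`C₀ = 2/((∑ aⁱⁱ)(α̃ - α))`, under the smallness condition on `α̃ - α`. -/
theorem auxiliary_subsolution (n : ℕ) (hn : 3 ≤ n) (ε R : ℝ) (hε : 0 < ε) (hR : 0 < R)
    (A : Matrix (Fin (n - 1)) (Fin (n - 1)) ℝ) (hA : A.IsSymm) (hpd : A.PosDef)
    (α α' : ℝ) (hα : 0 < α) (hα1 : α < 1) (hα' : 0 < α') (hα'1 : α' < 1) (hαα' : α < α')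
    (hsmall : ∀ x : EuclideanSpace ℝ (Fin (n - 1)), ‖x‖ ≤ R →
      (α' - α) * (∑ i, (∑ j, A i j * x j) ^ 2) / (ε + ∑ i, ∑ j, A i j * x i * x j)
        ≤ (1 / 2) * ∑ i, A i i) :
    ∀ x ∈ ball (0 : EuclideanSpace ℝ (Fin (n - 1))) R,
      (1 / (2 / ((∑ i, A i i) * (α' - α)))) *
          (ε + ∑ i, ∑ j, A i j * x i * x j) ^ ((α - α') / 2)
        ≤ ∑ k, fderiv ℝ (fun y : EuclideanSpace ℝ (Fin (n - 1)) =>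
            (ε + ∑ i, ∑ j, A i j * y i * y j) *
              fderiv ℝ (fun z : EuclideanSpace ℝ (Fin (n - 1)) =>
                -(ε + ∑ i, ∑ j, A i j * z i * z j) ^ ((α - α') / 2)) y
                (EuclideanSpace.single k 1)) x (EuclideanSpace.single k 1) := by
  intro x hx
  have hxR : ‖x‖ ≤ R := (mem_ball_zero_iff.mp hx).le
  have hq : 0 < ε + ∑ i, ∑ j, A i j * x i * x j := Q_pos hε hpd x
  have hdiag : ∀ i, 0 < A i i := by
    intro i
    have h : 0 < A i i := hpd.diag_pos
    simpa [dotProduct, Matrix.mulVec_single, Pi.single_apply] using h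
  have hne : Nonempty (Fin (n - 1)) := ⟨⟨0, by omega⟩⟩
  have ht : 0 < ∑ i, A i i :=
    Finset.sum_pos (fun i _ => hdiag i) Finset.univ_nonempty
  have hsum : ∀ k : Fin (n - 1),
      fderiv ℝ (fun y : EuclideanSpace ℝ (Fin (n - 1)) =>
        (ε + ∑ i, ∑ j, A i j * y i * y j) *
          fderiv ℝ (fun z : EuclideanSpace ℝ (Fin (n - 1)) =>
            -(ε + ∑ i, ∑ j, A i j * z i * z j) ^ ((α - α') / 2)) y
            (EuclideanSpace.single k 1)) x (EuclideanSpace.single k 1)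
      = (-2 * ((α - α') / 2)) * ((ε + ∑ i, ∑ j, A i j * x i * x j) ^ ((α - α') / 2) * A k k
          + (∑ j, A k j * x j) *
            (((α - α') / 2) * (ε + ∑ i, ∑ j, A i j * x i * x j) ^ ((α - α') / 2 - 1) *
              (2 * ∑ j, A k j * x j))) := by
    intro k
    rw [inner_eq hε hA hpd ((α - α') / 2) k]
    exact outer_eval hε hA hpd ((α - α') / 2) k x
  rw [Finset.sum_congr rfl fun k _ => hsum k]
  set q := ε + ∑ i, ∑ j, A i j * x i * x j with hqdef
  set t := ∑ i, A i i with htdef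
  set S := ∑ k, (∑ j, A k j * x j) ^ 2 with hSdef
  have hsplit : (∑ k, (-2 * ((α - α') / 2)) * (q ^ ((α - α') / 2) * A k k
      + (∑ j, A k j * x j) *
        (((α - α') / 2) * q ^ ((α - α') / 2 - 1) * (2 * ∑ j, A k j * x j))))
      = (-2 * ((α - α') / 2)) * q ^ ((α - α') / 2) * t
        + ((-2 * ((α - α') / 2)) * ((α - α') / 2) * 2 * q ^ ((α - α') / 2 - 1)) * S := by
    rw [htdef, hSdef, Finset.mul_sum, Finset.mul_sum, ← Finset.sum_add_distrib]
    exact Finset.sum_congr rfl fun k _ => by ring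
  rw [hsplit, one_div_div]
  have hS0 : 0 ≤ S := Finset.sum_nonneg fun k _ => sq_nonneg _
  have hsm : (α' - α) * S ≤ (1 / 2) * t * q := by
    have h := hsmall x hxR
    rw [div_le_iff₀ hq] at h
    linarith
  have hpow : 0 < q ^ ((α - α') / 2 - 1) := Real.rpow_pos_of_pos hq _
  have hqb : q ^ ((α - α') / 2) = q ^ ((α - α') / 2 - 1) * q := by
    have hb : (α - α') / 2 - 1 + 1 = (α - α') / 2 := by ring
    have e2 := Real.rpow_add_one hq.ne' ((α - α') / 2 - 1)
    rw [hb] at e2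
    exact e2
  rw [hqb]
  have h2 := mul_le_mul_of_nonneg_left hsm
    (le_of_lt (mul_pos (by linarith : (0:ℝ) < α' - α) hpow))
  nlinarith [h2, mul_pos hpow hq, mul_pos ht (by linarith : (0:ℝ) < α' - α)]
end

section
/- Let n ≥ 3, α ∈ (0,1), λ = α² + (n-1)α, and let H ∈ C([0,1)) satisfy H(r) = A'(r) + B(r) with |A(r)| ≤ C r^{2+α} and |B(r)| ≤ C r^{1+α} on (0,1), where A, B ∈ C¹([0,1)). Define w(r) = ∫₀^r s^{-(n+2α)} ∫₀^s τ^{n-2+α} H(τ) dτ ds and v(r) = r^α w(r). Then v solves r² v'' + n r v' - λ v = H on (0,1), and |v(r)| ≤ C' r^{1+α} for a constant C' depending only on n, α, C. -/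
open intervalIntegral Set MeasureTheory Filter

lemma euler_algebra (r α q p nn lam W Gg Hr : ℝ) (hr : 0 < r)
    (hq : q = nn + 2*α) (hp : p = nn - 2 + α) (hlam : lam = α^2 + (nn-1)*α) :
    r^2 * ((α * ((α-1) * r^(α-1-1))) * W + (α * r^(α-1)) * (r^(-q) * Gg)
        + ((α-q) * r^(α-q-1) * Gg + r^(α-q) * (r^p * Hr)))
      + nn * r * ((α * r^(α-1)) * W + r^(α-q) * Gg) - lam * (r^α * W) = Hr := by
  have hr0 : r ≠ 0 := hr.ne'
  have s6 : r^(α-q) * (r^p * Hr) = r⁻¹ * r⁻¹ * Hr := by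
    rw [← mul_assoc, ← Real.rpow_add hr,
      show α - q + p = (-1) + (-1) by rw [hq, hp]; ring, Real.rpow_add hr,
      Real.rpow_neg_one]
  have s1 : r^(α-1-1) = r^α * r⁻¹ * r⁻¹ := by
    rw [show α-1-1 = α + (-1) + (-1) by ring, Real.rpow_add hr, Real.rpow_add hr,
      Real.rpow_neg_one]
  have s2 : r^(α-1) = r^α * r⁻¹ := by
    rw [show α-1 = α + (-1) by ring, Real.rpow_add hr, Real.rpow_neg_one]
  have s4 : r^(α-q-1) = r^α * r^(-q) * r⁻¹ := by
    rw [show α-q-1 = α + (-q) + (-1) by ring, Real.rpow_add hr, Real.rpow_add hr,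
      Real.rpow_neg_one]
  have s3 : r^(α-q) = r^α * r^(-q) := by
    rw [show α-q = α + (-q) by ring, Real.rpow_add hr]
  rw [s6, s1, s2, s4, s3, hq, hlam]
  field_simp
  ring

/-- Variation-of-parameters solution for the Euler ODE `r²v'' + nrv' - λv = H` with
`λ = α² + (n-1)α`: the function `v(r) = r^α w(r)`, with
`w(r) = ∫₀^r s^{-(n+2α)} ∫₀^s τ^{n-2+α} H(τ) dτ ds`, solves the equation and
satisfies `|v(r)| ≤ C' r^{1+α}` when `H = A' + B` with `|A| ≤ C r^{2+α}`, `|B| ≤ C r^{1+α}`. -/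
theorem variation_of_parameters_euler (n : ℕ) (hn : 3 ≤ n) (α lam C : ℝ)
    (hα : 0 < α) (hα1 : α < 1) (hC : 0 < C) (hlam : lam = α ^ 2 + ((n : ℝ) - 1) * α)
    (H A B : ℝ → ℝ) (hHc : ContinuousOn H (Ico 0 1))
    (hA : ContDiffOn ℝ 1 A (Ico 0 1)) (hB : ContDiffOn ℝ 1 B (Ico 0 1))
    (hHAB : ∀ r ∈ Ioo (0 : ℝ) 1, H r = deriv A r + B r)
    (hAbound : ∀ r ∈ Ioo (0 : ℝ) 1, |A r| ≤ C * r ^ (2 + α))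
    (hBbound : ∀ r ∈ Ioo (0 : ℝ) 1, |B r| ≤ C * r ^ (1 + α)) :
    (∀ r ∈ Ioo (0 : ℝ) 1,
      r ^ 2 * deriv (deriv (fun t : ℝ =>
          t ^ α * ∫ s in (0 : ℝ)..t, s ^ (-((n : ℝ) + 2 * α)) *
            ∫ τ in (0 : ℝ)..s, τ ^ ((n : ℝ) - 2 + α) * H τ)) r
        + (n : ℝ) * r * deriv (fun t : ℝ =>
          t ^ α * ∫ s in (0 : ℝ)..t, s ^ (-((n : ℝ) + 2 * α)) *
            ∫ τ in (0 : ℝ)..s, τ ^ ((n : ℝ) - 2 + α) * H τ) r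
        - lam * (r ^ α * ∫ s in (0 : ℝ)..r, s ^ (-((n : ℝ) + 2 * α)) *
            ∫ τ in (0 : ℝ)..s, τ ^ ((n : ℝ) - 2 + α) * H τ) = H r) ∧
    ∃ C' : ℝ, 0 < C' ∧ ∀ r ∈ Ioo (0 : ℝ) 1,
      |r ^ α * ∫ s in (0 : ℝ)..r, s ^ (-((n : ℝ) + 2 * α)) *
          ∫ τ in (0 : ℝ)..s, τ ^ ((n : ℝ) - 2 + α) * H τ| ≤ C' * r ^ (1 + α) := by
  have hn3 : (3:ℝ) ≤ (n:ℝ) := by exact_mod_cast hn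
  set p : ℝ := (n:ℝ) - 2 + α with hp
  set q : ℝ := (n:ℝ) + 2*α with hq
  have hp1 : 1 ≤ p := by rw [hp]; linarith
  have hp0 : 0 < p := lt_of_lt_of_le one_pos hp1
  have hq0 : 0 < q := by rw [hq]; linarith
  have hpm1 : 0 < p - 1 := by rw [hp]; linarith
  set G : ℝ → ℝ := fun τ => τ ^ p * H τ with hGdef
  set g : ℝ → ℝ := fun s => intervalIntegral G 0 s volume with hgdef
  set f : ℝ → ℝ := fun s => s ^ (-q) * intervalIntegral G 0 s volume with hfdef
  set w : ℝ → ℝ := fun t => intervalIntegral f 0 t volume with hwdef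
  set v : ℝ → ℝ := fun t => t ^ α * intervalIntegral f 0 t volume with hvdef
  have hfs : ∀ s : ℝ, f s = s ^ (-q) * g s := fun _ => rfl
  -- continuity of G on Ico 0 1
  have hrpowC : ∀ e : ℝ, 0 < e → Continuous (fun τ : ℝ => τ ^ e) := by
    intro e he
    exact continuous_iff_continuousAt.mpr fun x =>
      Real.continuousAt_rpow_const x e (Or.inr he.le)
  have hGcont : ContinuousOn G (Ico 0 1) :=
    ((hrpowC p hp0).continuousOn).mul hHc
  have hGint : ∀ s ∈ Ico (0:ℝ) 1, IntervalIntegrable G volume 0 s := by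
    intro s hs
    apply ContinuousOn.intervalIntegrable
    rw [uIcc_of_le hs.1]
    exact hGcont.mono fun x hx => ⟨hx.1, lt_of_le_of_lt hx.2 hs.2⟩
  -- derivative of A
  have hAdA : ∀ τ ∈ Ioo (0:ℝ) 1, HasDerivAt A (H τ - B τ) τ := by
    intro τ hτ
    have hmem : Ico (0:ℝ) 1 ∈ nhds τ :=
      mem_nhds_iff.mpr ⟨Ioo 0 1, Ioo_subset_Ico_self, isOpen_Ioo, hτ⟩
    have hd : DifferentiableAt ℝ A τ :=
      ((hA.differentiableOn one_ne_zero) τ ⟨hτ.1.le, hτ.2⟩).differentiableAt hmem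
    have h2 := hd.hasDerivAt
    rw [show H τ - B τ = deriv A τ by rw [hHAB τ hτ]; ring]
    exact h2
  -- bound on g
  have hgb : ∀ s ∈ Ioo (0:ℝ) 1, |g s| ≤ 3 * C * s ^ q := by
    intro s hs
    have hs0 : (0:ℝ) < s := hs.1
    have hIccsub : Icc (0:ℝ) s ⊆ Ico 0 1 := fun x hx => ⟨hx.1, lt_of_le_of_lt hx.2 hs.2⟩
    have hIocsub : Ioc (0:ℝ) s ⊆ Ioo 0 1 := fun x hx => ⟨hx.1, lt_of_le_of_lt hx.2 hs.2⟩
    have hAcont : ContinuousOn A (Icc 0 s) := hA.continuousOn.mono hIccsub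
    have hBcont : ContinuousOn B (Icc 0 s) := hB.continuousOn.mono hIccsub
    have hHcont : ContinuousOn H (Icc 0 s) := hHc.mono hIccsub
    have hu1int : IntervalIntegrable (fun τ => τ ^ (p-1) * A τ) volume 0 s := by
      apply ContinuousOn.intervalIntegrable
      rw [uIcc_of_le hs0.le]
      exact ((hrpowC _ hpm1).continuousOn).mul hAcont
    have hu2int : IntervalIntegrable (fun τ => τ ^ p * B τ) volume 0 s := by
      apply ContinuousOn.intervalIntegrable
      rw [uIcc_of_le hs0.le]
      exact ((hrpowC _ hp0).continuousOn).mul hBcont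
    have hGint' : IntervalIntegrable G volume 0 s := hGint s ⟨hs0.le, hs.2⟩
    have hψeq : (fun τ : ℝ => p * τ ^ (p-1) * A τ + τ ^ p * (H τ - B τ))
        = fun τ => p * (τ ^ (p-1) * A τ) + (G τ - τ ^ p * B τ) := by
      funext τ; simp only [hGdef]; ring
    have hψint : IntervalIntegrable (fun τ : ℝ => p * τ ^ (p-1) * A τ + τ ^ p * (H τ - B τ)) volume 0 s := by
      rw [hψeq]
      exact (hu1int.const_mul p).add (hGint'.sub hu2int)
    have hΦcont : ContinuousOn (fun τ : ℝ => τ ^ p * A τ) (Icc 0 s) :=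
      ((hrpowC p hp0).continuousOn).mul hAcont
    have hΦderiv : ∀ τ ∈ Ioo (0:ℝ) s, HasDerivAt (fun τ : ℝ => τ ^ p * A τ)
        (p * τ ^ (p-1) * A τ + τ ^ p * (H τ - B τ)) τ := by
      intro τ hτ
      have hτ1 : τ ∈ Ioo (0:ℝ) 1 := ⟨hτ.1, hτ.2.trans hs.2⟩
      exact (Real.hasDerivAt_rpow_const (Or.inl hτ.1.ne')).mul (hAdA τ hτ1)
    have hFTC : ∫ τ in (0:ℝ)..s, (p * τ ^ (p-1) * A τ + τ ^ p * (H τ - B τ))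
        = s ^ p * A s - 0 ^ p * A 0 :=
      integral_eq_sub_of_hasDerivAt_of_le hs0.le hΦcont hΦderiv hψint
    rw [Real.zero_rpow hp0.ne', zero_mul, sub_zero] at hFTC
    have hsplit : ∫ τ in (0:ℝ)..s, (p * τ ^ (p-1) * A τ + τ ^ p * (H τ - B τ))
        = p * (∫ τ in (0:ℝ)..s, τ ^ (p-1) * A τ)
          + ((∫ τ in (0:ℝ)..s, G τ) - ∫ τ in (0:ℝ)..s, τ ^ p * B τ) := by
      rw [show (fun τ : ℝ => p * τ ^ (p-1) * A τ + τ ^ p * (H τ - B τ)) = _ from hψeq]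
      rw [intervalIntegral.integral_add (hu1int.const_mul p) (hGint'.sub hu2int),
        intervalIntegral.integral_sub hGint' hu2int, intervalIntegral.integral_const_mul]
    have hgs : g s = s ^ p * A s - p * (∫ τ in (0:ℝ)..s, τ ^ (p-1) * A τ)
        + ∫ τ in (0:ℝ)..s, τ ^ p * B τ := by
      have := hsplit.symm.trans hFTC
      simp only [hgdef]
      linarith [this]
    -- integral bound for the comparison function
    have hcmpint : IntervalIntegrable (fun τ : ℝ => C * τ ^ (p+1+α)) volume 0 s := by
      apply ContinuousOn.intervalIntegrable
      rw [uIcc_of_le hs0.le]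
      exact (continuous_const.mul (hrpowC _ (by linarith))).continuousOn
    have hcmpval : ∫ τ in (0:ℝ)..s, C * τ ^ (p+1+α) = C * (s ^ q / q) := by
      rw [intervalIntegral.integral_const_mul, integral_rpow (Or.inl (by linarith : (-1:ℝ) < p+1+α))]
      rw [show p + 1 + α + 1 = q by rw [hp, hq]; ring, Real.zero_rpow hq0.ne', sub_zero]
    have hI1 : |∫ τ in (0:ℝ)..s, τ ^ (p-1) * A τ| ≤ C * (s ^ q / q) := by
      have hb : ∀ᵐ t ∂(volume.restrict (Set.uIoc (0:ℝ) s)), ‖t ^ (p-1) * A t‖ ≤ C * t ^ (p+1+α) := by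
        rw [uIoc_of_le hs0.le, ae_restrict_iff' measurableSet_Ioc]
        refine Eventually.of_forall fun t ht => ?_
        have ht1 : t ∈ Ioo (0:ℝ) 1 := hIocsub ht
        have ht0 : (0:ℝ) < t := ht1.1
        rw [Real.norm_eq_abs, abs_mul, abs_of_nonneg (Real.rpow_nonneg ht0.le _)]
        calc t ^ (p-1) * |A t| ≤ t ^ (p-1) * (C * t ^ (2+α)) :=
              mul_le_mul_of_nonneg_left (hAbound t ht1) (Real.rpow_nonneg ht0.le _)
          _ = C * t ^ (p+1+α) := by
              have hpow : t ^ (p-1) * t ^ (2+α) = t ^ (p+1+α) := by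
                rw [← Real.rpow_add ht0, show p - 1 + (2+α) = p+1+α by ring]
              rw [mul_left_comm, hpow]
      have := intervalIntegral.norm_integral_le_abs_of_norm_le hb hcmpint
      rw [hcmpval] at this
      calc |∫ τ in (0:ℝ)..s, τ ^ (p-1) * A τ| ≤ |C * (s ^ q / q)| := this
        _ = C * (s ^ q / q) := abs_of_nonneg (by positivity)
    have hI2 : |∫ τ in (0:ℝ)..s, τ ^ p * B τ| ≤ C * (s ^ q / q) := by
      have hb : ∀ᵐ t ∂(volume.restrict (Set.uIoc (0:ℝ) s)), ‖t ^ p * B t‖ ≤ C * t ^ (p+1+α) := by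
        rw [uIoc_of_le hs0.le, ae_restrict_iff' measurableSet_Ioc]
        refine Eventually.of_forall fun t ht => ?_
        have ht1 : t ∈ Ioo (0:ℝ) 1 := hIocsub ht
        have ht0 : (0:ℝ) < t := ht1.1
        rw [Real.norm_eq_abs, abs_mul, abs_of_nonneg (Real.rpow_nonneg ht0.le _)]
        calc t ^ p * |B t| ≤ t ^ p * (C * t ^ (1+α)) :=
              mul_le_mul_of_nonneg_left (hBbound t ht1) (Real.rpow_nonneg ht0.le _)
          _ = C * t ^ (p+1+α) := by
              have hpow : t ^ p * t ^ (1+α) = t ^ (p+1+α) := by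
                rw [← Real.rpow_add ht0, show p + (1+α) = p+1+α by ring]
              rw [mul_left_comm, hpow]
      have := intervalIntegral.norm_integral_le_abs_of_norm_le hb hcmpint
      rw [hcmpval] at this
      calc |∫ τ in (0:ℝ)..s, τ ^ p * B τ| ≤ |C * (s ^ q / q)| := this
        _ = C * (s ^ q / q) := abs_of_nonneg (by positivity)
    have hΦb : |s ^ p * A s| ≤ C * s ^ q := by
      rw [abs_mul, abs_of_nonneg (Real.rpow_nonneg hs0.le _)]
      calc s ^ p * |A s| ≤ s ^ p * (C * s ^ (2+α)) :=
            mul_le_mul_of_nonneg_left (hAbound s hs) (Real.rpow_nonneg hs0.le _)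
        _ = C * s ^ q := by
            have hpow : s ^ p * s ^ (2+α) = s ^ q := by
              rw [← Real.rpow_add hs0, show p + (2+α) = q by rw [hp, hq]; ring]
            rw [mul_left_comm, hpow]
    have hqs : (p + 1) * (C * (s ^ q / q)) ≤ 2 * C * s ^ q := by
      have hple : p + 1 ≤ q := by rw [hp, hq]; linarith
      have hsq : (0:ℝ) ≤ s ^ q := Real.rpow_nonneg hs0.le _
      have h1 : (p+1) * (C * (s ^ q / q)) = ((p+1)/q) * (C * s ^ q) := by
        field_simp
      have h2 : (p+1)/q ≤ 1 := (div_le_one hq0).mpr hple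
      rw [h1]
      calc ((p+1)/q) * (C * s ^ q) ≤ 1 * (C * s ^ q) :=
            mul_le_mul_of_nonneg_right h2 (by positivity)
        _ ≤ 2 * C * s ^ q := by nlinarith
    rw [hgs]
    have h3 := abs_add_le (s ^ p * A s - p * (∫ τ in (0:ℝ)..s, τ ^ (p-1) * A τ))
      (∫ τ in (0:ℝ)..s, τ ^ p * B τ)
    have h4 : |s ^ p * A s - p * (∫ τ in (0:ℝ)..s, τ ^ (p-1) * A τ)|
        ≤ |s ^ p * A s| + p * |∫ τ in (0:ℝ)..s, τ ^ (p-1) * A τ| := by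
      have := abs_sub (s ^ p * A s) (p * (∫ τ in (0:ℝ)..s, τ ^ (p-1) * A τ))
      rwa [abs_mul (p) _, abs_of_nonneg hp0.le] at this
    have h5 : p * |∫ τ in (0:ℝ)..s, τ ^ (p-1) * A τ| ≤ p * (C * (s ^ q / q)) :=
      mul_le_mul_of_nonneg_left hI1 hp0.le
    calc |(s ^ p * A s - p * (∫ τ in (0:ℝ)..s, τ ^ (p-1) * A τ)) + ∫ τ in (0:ℝ)..s, τ ^ p * B τ|
        ≤ (|s ^ p * A s| + p * |∫ τ in (0:ℝ)..s, τ ^ (p-1) * A τ|) + |∫ τ in (0:ℝ)..s, τ ^ p * B τ| :=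
          le_trans h3 (add_le_add_left h4 _)
      _ ≤ (C * s ^ q + p * (C * (s ^ q / q))) + C * (s ^ q / q) :=
          add_le_add (add_le_add hΦb h5) hI2
      _ = C * s ^ q + (p + 1) * (C * (s ^ q / q)) := by ring
      _ ≤ C * s ^ q + 2 * C * s ^ q := by linarith [hqs]
      _ = 3 * C * s ^ q := by ring
  -- derivative of g
  have hg' : ∀ t ∈ Ioo (0:ℝ) 1, HasDerivAt g (G t) t := by
    intro t ht
    have hGco : ContinuousOn G (Ioo 0 1) := hGcont.mono Ioo_subset_Ico_self
    exact integral_hasDerivAt_right (hGint t ⟨ht.1.le, ht.2⟩)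
      (hGco.stronglyMeasurableAtFilter isOpen_Ioo t ht)
      (hGco.continuousAt (isOpen_Ioo.mem_nhds ht))
  -- continuity of f on Ioo 0 1
  have hfcont : ContinuousOn f (Ioo 0 1) := by
    intro x hx
    exact ((Real.continuousAt_rpow_const x (-q) (Or.inl hx.1.ne')).continuousWithinAt).mul
      ((hg' x hx).continuousAt.continuousWithinAt)
  -- bound on f
  have hfb : ∀ s ∈ Ioo (0:ℝ) 1, |f s| ≤ 3 * C := by
    intro s hs
    rw [hfs s, abs_mul, abs_of_nonneg (Real.rpow_nonneg hs.1.le _)]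
    calc s ^ (-q) * |g s| ≤ s ^ (-q) * (3 * C * s ^ q) :=
          mul_le_mul_of_nonneg_left (hgb s hs) (Real.rpow_nonneg hs.1.le _)
      _ = 3 * C * (s ^ (-q) * s ^ q) := by ring
      _ = 3 * C := by rw [← Real.rpow_add hs.1, neg_add_cancel, Real.rpow_zero, mul_one]
  -- integrability of f
  have hfint : ∀ r ∈ Ioo (0:ℝ) 1, IntervalIntegrable f volume 0 r := by
    intro r hr
    rw [intervalIntegrable_iff_integrableOn_Ioc_of_le hr.1.le]
    have hsub : Ioc (0:ℝ) r ⊆ Ioo 0 1 := fun x hx => ⟨hx.1, lt_of_le_of_lt hx.2 hr.2⟩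
    refine ⟨(hfcont.mono hsub).aestronglyMeasurable measurableSet_Ioc, ?_⟩
    refine HasFiniteIntegral.restrict_of_bounded (C := 3*C) (by simp) ?_
    rw [ae_restrict_iff' measurableSet_Ioc]
    exact Eventually.of_forall fun x hx => hfb x (hsub hx)
  -- derivative of w
  have hw' : ∀ t ∈ Ioo (0:ℝ) 1, HasDerivAt w (f t) t := by
    intro t ht
    exact integral_hasDerivAt_right (hfint t ht)
      (hfcont.stronglyMeasurableAtFilter isOpen_Ioo t ht)
      (hfcont.continuousAt (isOpen_Ioo.mem_nhds ht))
  -- bound on w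
  have hwb : ∀ r ∈ Ioo (0:ℝ) 1, |w r| ≤ 3 * C * r := by
    intro r hr
    have := intervalIntegral.norm_integral_le_of_norm_le_const (C := 3*C) (f := f)
      (a := 0) (b := r) (fun x hx => by
        rw [uIoc_of_le hr.1.le] at hx
        exact hfb x ⟨hx.1, lt_of_le_of_lt hx.2 hr.2⟩)
    simpa [abs_of_nonneg hr.1.le] using this
  -- derivative of v
  have hv1 : ∀ t ∈ Ioo (0:ℝ) 1, HasDerivAt v (α * t^(α-1) * w t + t^(α-q) * g t) t := by
    intro t ht
    have h1 : HasDerivAt (fun x : ℝ => x ^ α) (α * t^(α-1)) t := by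
      simpa using Real.hasDerivAt_rpow_const (x := t) (p := α) (Or.inl ht.1.ne')
    have h2 := h1.mul (hw' t ht)
    have h3 : α * t^(α-1) * w t + t^(α-q) * g t = α * t^(α-1) * w t + t^α * f t := by
      rw [hfs t, ← mul_assoc, ← Real.rpow_add ht.1, ← sub_eq_add_neg]
    rw [h3]
    exact h2
  constructor
  · -- the ODE
    intro r hr
    have hr0 : (0:ℝ) < r := hr.1
    have hveq : deriv v =ᶠ[nhds r] (fun t => α * t^(α-1) * w t + t^(α-q) * g t) :=
      eventuallyEq_of_mem (isOpen_Ioo.mem_nhds hr) (fun t ht => (hv1 t ht).deriv)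
    have hv2 : HasDerivAt (fun t => α * t^(α-1) * w t + t^(α-q) * g t)
        ((α * ((α-1) * r^(α-1-1))) * w r + (α * r^(α-1)) * f r
          + ((α-q) * r^(α-q-1) * g r + r^(α-q) * G r)) r := by
      have h2a : HasDerivAt (fun t : ℝ => α * t^(α-1) * w t)
          ((α * ((α-1) * r^(α-1-1))) * w r + (α * r^(α-1)) * f r) r := by
        have hu : HasDerivAt (fun t : ℝ => α * t^(α-1)) (α * ((α-1) * r^(α-1-1))) r :=
          (Real.hasDerivAt_rpow_const (x := r) (p := α-1) (Or.inl hr0.ne')).const_mul α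
        exact hu.mul (hw' r hr)
      have h2b : HasDerivAt (fun t : ℝ => t^(α-q) * g t)
          ((α-q) * r^(α-q-1) * g r + r^(α-q) * G r) r :=
        (Real.hasDerivAt_rpow_const (x := r) (p := α-q) (Or.inl hr0.ne')).mul (hg' r hr)
      exact h2a.add h2b
    show r ^ 2 * deriv (deriv v) r + (n:ℝ) * r * deriv v r - lam * (r ^ α * w r) = H r
    rw [hveq.deriv_eq, hv2.deriv, (hv1 r hr).deriv, hfs r]
    have := euler_algebra r α q p (n:ℝ) lam (w r) (g r) (H r) hr0 hq hp hlam
    calc r ^ 2 * ((α * ((α-1) * r^(α-1-1))) * w r + (α * r^(α-1)) * (r ^ (-q) * g r)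
          + ((α-q) * r^(α-q-1) * g r + r^(α-q) * G r))
        + (n:ℝ) * r * (α * r^(α-1) * w r + r^(α-q) * g r) - lam * (r ^ α * w r)
        = r^2 * ((α * ((α-1) * r^(α-1-1))) * w r + (α * r^(α-1)) * (r^(-q) * g r)
          + ((α-q) * r^(α-q-1) * g r + r^(α-q) * (r^p * H r)))
        + (n:ℝ) * r * ((α * r^(α-1)) * w r + r^(α-q) * g r) - lam * (r^α * w r) := by
          simp only [hGdef]
      _ = H r := this
  · -- the bound
    refine ⟨3*C, by linarith, fun r hr => ?_⟩
    have hr0 : (0:ℝ) < r := hr.1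
    show |r ^ α * w r| ≤ 3*C * r ^ (1+α)
    rw [abs_mul, abs_of_nonneg (Real.rpow_nonneg hr0.le _)]
    calc r ^ α * |w r| ≤ r ^ α * (3 * C * r) :=
          mul_le_mul_of_nonneg_left (hwb r hr) (Real.rpow_nonneg hr0.le _)
      _ = 3 * C * (r ^ α * r ^ (1:ℝ)) := by rw [Real.rpow_one]; ring
      _ = 3 * C * r ^ (1+α) := by rw [← Real.rpow_add hr0, add_comm]
end

section
/- (Moser iteration convergence) Let χ > 1 and let (tᵢ) be defined by tᵢ = t₀ χⁱ for some t₀ > 0. Suppose (mᵢ) is a sequence of nonnegative reals with m_{i+1} ≤ (2χ)^{Ci/χⁱ} mᵢ + C/χⁱ for all i ≥ 0 and some C > 0. Then the sequence (mᵢ) is bounded by a constant depending only on χ, C, and m₀. -/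
/-!
Unrolling `m (i+1) ≤ aᵢ mᵢ + bᵢ` with `aᵢ ≥ 1` gives `mₙ ≤ (∏_{i<n} aᵢ)(m₀ + ∑_{i<n} bᵢ)`.
Here `∏ aᵢ = (2χ)^{C ∑ i χ⁻ⁱ}` and `∑ bᵢ = C ∑ χ⁻ⁱ`, and both series converge since `χ⁻¹ < 1`.
-/

open Finset

theorem le_prod_mul_add_sum_of_le_mul_add {R : Type*} [CommSemiring R] [PartialOrder R]
    [IsOrderedRing R] {m a b : ℕ → R} (ha : ∀ i, 1 ≤ a i) (hb : ∀ i, 0 ≤ b i)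
    (hrec : ∀ i, m (i + 1) ≤ a i * m i + b i) (n : ℕ) :
    m n ≤ (∏ i ∈ range n, a i) * (m 0 + ∑ i ∈ range n, b i) := by
  induction n with
  | zero => simp
  | succ n ih =>
    have hprod : 1 ≤ a n * ∏ i ∈ range n, a i :=
      one_le_mul_of_one_le_of_one_le (ha n) (one_le_prod fun i _ => ha i)
    calc m (n + 1) ≤ a n * m n + b n := hrec n
      _ ≤ a n * ((∏ i ∈ range n, a i) * (m 0 + ∑ i ∈ range n, b i))
            + (a n * ∏ i ∈ range n, a i) * b n := by
        gcongr
        · exact zero_le_one.trans (ha n)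
        · exact le_mul_of_one_le_left (hb n) hprod
      _ = (∏ i ∈ range (n + 1), a i) * (m 0 + ∑ i ∈ range (n + 1), b i) := by
        rw [prod_range_succ, sum_range_succ]; ring

theorem le_mul_max_of_le_mul_add {m a b : ℕ → ℝ} {P : ℝ} (ha : ∀ i, 1 ≤ a i)
    (hb : ∀ i, 0 ≤ b i) (hrec : ∀ i, m (i + 1) ≤ a i * m i + b i)
    (hP : ∀ n, ∏ i ∈ range n, a i ≤ P) (hbs : Summable b) (n : ℕ) :
    m n ≤ P * max (m 0 + ∑' i, b i) 0 :=
  calc m n ≤ (∏ i ∈ range n, a i) * (m 0 + ∑ i ∈ range n, b i) :=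
        le_prod_mul_add_sum_of_le_mul_add ha hb hrec n
    _ ≤ (∏ i ∈ range n, a i) * max (m 0 + ∑' i, b i) 0 := by
        gcongr
        · exact prod_nonneg fun i _ => zero_le_one.trans (ha i)
        · exact le_max_of_le_left (by gcongr; exact hbs.sum_le_tsum _ fun i _ => hb i)
    _ ≤ P * max (m 0 + ∑' i, b i) 0 := by gcongr; exact hP n

theorem prod_rpow_le_rpow_tsum {q : ℝ} (hq : 1 ≤ q) {e : ℕ → ℝ} (he : ∀ i, 0 ≤ e i)
    (hes : Summable e) (n : ℕ) : ∏ i ∈ range n, q ^ e i ≤ q ^ ∑' i, e i := by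
  rw [← Real.rpow_sum_of_pos (zero_lt_one.trans_le hq)]
  exact Real.rpow_le_rpow_of_exponent_le hq (hes.sum_le_tsum _ fun i _ => he i)

theorem moser_iteration_bounded_general (χ C : ℝ) (hχ : 1 < χ) (hC : 0 < C)
    (m : ℕ → ℝ)
    (hrec : ∀ i : ℕ, m (i + 1) ≤ (2 * χ) ^ (C * i / χ ^ i) * m i + C / χ ^ i) :
    ∃ M : ℝ, ∀ i, m i ≤ M := by
  have hχ₀ : 0 < χ := zero_lt_one.trans hχ
  have hr : ‖χ⁻¹‖ < 1 := by
    rw [Real.norm_of_nonneg (inv_nonneg.2 hχ₀.le)]; exact inv_lt_one_of_one_lt₀ hχ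
  have hexp : Summable fun i : ℕ => C * i / χ ^ i := by
    simpa [mul_div_assoc, div_eq_mul_inv, mul_assoc] using
      (summable_pow_mul_geometric_of_norm_lt_one 1 hr).mul_left C
  have hadd : Summable fun i : ℕ => C / χ ^ i := by
    simpa [div_eq_mul_inv] using (summable_geometric_of_norm_lt_one hr).mul_left C
  exact ⟨_, le_mul_max_of_le_mul_add (fun i => Real.one_le_rpow (by linarith) (by positivity))
    (fun i => by positivity) hrec
    (prod_rpow_le_rpow_tsum (by linarith) (fun i => by positivity) hexp) hadd⟩

/-- Abstract Moser iteration convergence: if `χ > 1`, `C > 0` and the nonnegative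
sequence `m` satisfies `m (i+1) ≤ (2χ)^(C i / χ^i) * m i + C / χ^i`, then `m` is bounded. -/
theorem moser_iteration_bounded (χ C : ℝ) (hχ : 1 < χ) (hC : 0 < C)
    (m : ℕ → ℝ) (hm : ∀ i, 0 ≤ m i)
    (hrec : ∀ i : ℕ, m (i + 1) ≤ (2 * χ) ^ (C * i / χ ^ i) * m i + C / χ ^ i) :
    ∃ M : ℝ, ∀ i, m i ≤ M :=
  moser_iteration_bounded_general χ C hχ hC m hrec
end
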